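/- Let 0 < d < 1, integers 1 ≤ m < n with (m,n) ∈ {(1,2),(1,3),(2,3)}, ξ_G, ξ_I, ξ_II with 0 ≤ ξ_G < ξ_I and ξ_II = 2ξ_I, γ_I = (ξ_II² − ξ_G²)/(ξ_II² − ξ_I²), γ_II = (ξ_G² − ξ_I²)/(ξ_II² − ξ_I²), and σ_I, σ_II ∈ [0,1]. Then K := γ_I d^m (σ_I + (1−σ_I)d) + γ_II d^n (σ_II + (1−σ_II)d) satisfies 0 < K < 1. -/

import Mathlib

/-! With `γ := γ_II` one has `γ_I = 1 - γ` and `γ ∈ [-1/3, 0]`, since `ξ_II² - ξ_I² = 3 ξ_I²`.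
Writing `A := d^m (σ_I + (1-σ_I)d)` and `B := d^n (σ_II + (1-σ_II)d)`, both relaxation factors lie
in `[d, 1]`, so `d^4 ≤ B ≤ A ≤ d` because `m < n`. Hence `K = A - γ (A - B)` lies between
`A > 0` and `(4A - B)/3 ≤ (4d - d^4)/3`, and `3 - 4d + d^4 = (1 - d)^2 (d^2 + 2d + 3) > 0`. -/

open Set

lemma add_one_sub_mul_mem_Icc {d σ : ℝ} (hd : d ≤ 1) (hσ : σ ∈ Icc (0 : ℝ) 1) :
    σ + (1 - σ) * d ∈ Icc d 1 := by
  obtain ⟨hσ0, hσ1⟩ := hσ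
  constructor <;> nlinarith

lemma sub_div_sub_eq_one_sub_div {a b c : ℝ} (h : c ≠ b) :
    (c - a) / (c - b) = 1 - (a - b) / (c - b) := by
  rw [one_sub_div (sub_ne_zero.2 h)]
  ring_nf

lemma sq_sub_sq_div_two_mul_sq_sub_sq_mem_Icc {ξG ξI : ℝ} (hG : 0 ≤ ξG) (hGI : ξG < ξI) :
    (ξG ^ 2 - ξI ^ 2) / ((2 * ξI) ^ 2 - ξI ^ 2) ∈ Icc (-1 / 3 : ℝ) 0 := by
  have hden : 0 < (2 * ξI) ^ 2 - ξI ^ 2 := by nlinarith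
  constructor
  · rw [le_div_iff₀ hden]
    nlinarith
  · exact div_nonpos_of_nonpos_of_nonneg (by nlinarith) hden.le

lemma one_sub_mul_add_mul_mem_Icc {γ A B : ℝ} (hγ : γ ∈ Icc (-1 / 3 : ℝ) 0) (hBA : B ≤ A) :
    (1 - γ) * A + γ * B ∈ Icc A ((4 * A - B) / 3) := by
  obtain ⟨hγl, hγu⟩ := hγ
  constructor <;> nlinarith

section Powers

variable {d s t : ℝ} {m n k : ℕ} (hd0 : 0 < d) (hd1 : d ≤ 1)
include hd0 hd1

lemma pow_mul_le_pow_mul_of_lt (hmn : m < n) (hs : s ∈ Icc d 1) (ht : t ∈ Icc d 1) :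
    d ^ n * t ≤ d ^ m * s :=
  calc d ^ n * t ≤ d ^ n := mul_le_of_le_one_right (by positivity) ht.2
    _ ≤ d ^ (m + 1) := pow_le_pow_of_le_one hd0.le hd1 hmn
    _ = d ^ m * d := pow_succ d m
    _ ≤ d ^ m * s := mul_le_mul_of_nonneg_left hs.1 (by positivity)

lemma pow_mul_le_self (hm : 1 ≤ m) (hs : s ∈ Icc d 1) : d ^ m * s ≤ d :=
  calc d ^ m * s ≤ d ^ m := mul_le_of_le_one_right (by positivity) hs.2
    _ ≤ d ^ 1 := pow_le_pow_of_le_one hd0.le hd1 hm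
    _ = d := pow_one d

lemma pow_succ_le_pow_mul (hn : n ≤ k) (ht : t ∈ Icc d 1) : d ^ (k + 1) ≤ d ^ n * t :=
  calc d ^ (k + 1) ≤ d ^ (n + 1) := pow_le_pow_of_le_one hd0.le hd1 (by omega)
    _ = d ^ n * d := pow_succ d n
    _ ≤ d ^ n * t := mul_le_mul_of_nonneg_left ht.1 (by positivity)

end Powers

lemma four_mul_sub_pow_four_lt_three {d : ℝ} (hd : d < 1) : 4 * d - d ^ 4 < 3 := by
  have h : 3 - (4 * d - d ^ 4) = (1 - d) ^ 2 * ((d + 1) ^ 2 + 2) := by ring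
  have : 0 < (1 - d) ^ 2 * ((d + 1) ^ 2 + 2) := by
    have : 0 < 1 - d := by linarith
    positivity
  linarith

theorem contraction_constant_bounds
    (d : ℝ) (hd0 : 0 < d) (hd1 : d < 1)
    (m n : ℕ) (hmn : (m, n) = (1, 2) ∨ (m, n) = (1, 3) ∨ (m, n) = (2, 3))
    (ξG ξI ξII : ℝ) (hG : 0 ≤ ξG) (hGI : ξG < ξI) (hII : ξII = 2 * ξI)
    (γI γII : ℝ)
    (hγI : γI = (ξII ^ 2 - ξG ^ 2) / (ξII ^ 2 - ξI ^ 2))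
    (hγII : γII = (ξG ^ 2 - ξI ^ 2) / (ξII ^ 2 - ξI ^ 2))
    (σI σII : ℝ) (hσI : σI ∈ Set.Icc (0:ℝ) 1) (hσII : σII ∈ Set.Icc (0:ℝ) 1) :
    0 < γI * d ^ m * (σI + (1 - σI) * d) + γII * d ^ n * (σII + (1 - σII) * d) ∧
    γI * d ^ m * (σI + (1 - σI) * d) + γII * d ^ n * (σII + (1 - σII) * d) < 1 := by
  have hγI' : γI = 1 - γII := by
    have hξ : ξII ^ 2 ≠ ξI ^ 2 := by
      subst hII
      nlinarith [hG.trans_lt hGI]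
    rw [hγI, hγII, sub_div_sub_eq_one_sub_div hξ]
  have hγ : γII ∈ Icc (-1 / 3 : ℝ) 0 := hγII ▸ hII ▸ sq_sub_sq_div_two_mul_sq_sub_sq_mem_Icc hG hGI
  obtain ⟨hm, hmn, hn⟩ : 1 ≤ m ∧ m < n ∧ n ≤ 3 := by
    rcases hmn with h | h | h <;> obtain ⟨rfl, rfl⟩ := Prod.mk.inj h <;> omega
  have hsI := add_one_sub_mul_mem_Icc hd1.le hσI
  have hsII := add_one_sub_mul_mem_Icc hd1.le hσII
  have hK := one_sub_mul_add_mul_mem_Icc hγ (pow_mul_le_pow_mul_of_lt hd0 hd1.le hmn hsI hsII)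
  have hA_pos : 0 < d ^ m * (σI + (1 - σI) * d) := mul_pos (by positivity) (hd0.trans_le hsI.1)
  have hA_le := pow_mul_le_self hd0 hd1.le hm hsI
  have hB_ge : d ^ 4 ≤ _ := pow_succ_le_pow_mul hd0 hd1.le hn hsII
  rw [hγI', mul_assoc, mul_assoc]
  exact ⟨hA_pos.trans_le hK.1, by linarith [hK.2, four_mul_sub_pow_four_lt_three hd1]⟩
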